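/- arXiv:1606.04680 — 2 statements merged into one kernel-verified Lean document; each statement's English description precedes it below -/
import Mathlib

section
/- The Kleisli homset Kl(𝒢)([0,1], 1) of the sub-Giry monad, identified with the set of measurable functions from ([0,1], Borel) to ([0,1], Borel) with the pointwise order, is not a directed-complete partial order: the directed family of characteristic functions { χ_X | X Borel, X ⊆ V }, where V ⊆ [0,1] is a non-Borel set, has no least upper bound among measurable functions. -/
/-!
A least upper bound `h` of the indicators `χ_X` (`X` measurable, `X ⊆ V`) is `≥ 1` on `V`,
since `χ_{x}` belongs to the family for each `x ∈ V`. It is `≤ 0` off `V`: every `χ_X`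
vanishes at a point `y ∉ V`, so lowering `h` to `0` at `y` gives another measurable upper
bound. Hence `V = h⁻¹[1, ∞)` would be measurable.
-/

open Set

section

variable {α : Type*} [MeasurableSpace α] [MeasurableSingletonClass α] {V : Set α}
  {h : {f : α → ℝ // Measurable f}}

def measurableIndicatorsIn (V : Set α) : Set {f : α → ℝ // Measurable f} :=
  {f | ∃ X : Set α, MeasurableSet X ∧ X ⊆ V ∧ f.1 = X.indicator fun _ => 1}

theorem one_le_of_mem_upperBounds_measurableIndicatorsIn
    (hh : h ∈ upperBounds (measurableIndicatorsIn V)) {x : α} (hx : x ∈ V) : 1 ≤ h.1 x := by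
  have hχ : (⟨({x} : Set α).indicator fun _ => 1,
      measurable_const.indicator (measurableSet_singleton x)⟩ : {f : α → ℝ // Measurable f}) ∈
      measurableIndicatorsIn V :=
    ⟨{x}, measurableSet_singleton x, singleton_subset_iff.mpr hx, rfl⟩
  simpa using hh hχ x

theorem indicator_compl_singleton_mem_upperBounds_measurableIndicatorsIn
    (hh : h ∈ upperBounds (measurableIndicatorsIn V)) {y : α} (hy : y ∉ V) :
    (⟨({y}ᶜ : Set α).indicator h.1, h.2.indicator (measurableSet_singleton y).compl⟩ :
      {f : α → ℝ // Measurable f}) ∈ upperBounds (measurableIndicatorsIn V) := by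
  rintro f hf x
  obtain ⟨X, hX, hXV, hfX⟩ := hf
  by_cases hxy : x = y
  · subst hxy
    have : f.1 x = 0 := by rw [hfX]; exact indicator_of_notMem (fun hxX => hy (hXV hxX)) _
    simp [this]
  · show f.1 x ≤ ({y}ᶜ : Set α).indicator h.1 x
    rw [indicator_of_mem hxy]
    exact hh ⟨X, hX, hXV, hfX⟩ x

theorem IsLUB.nonpos_of_notMem_measurableIndicatorsIn (hh : IsLUB (measurableIndicatorsIn V) h)
    {y : α} (hy : y ∉ V) : h.1 y ≤ 0 := by
  simpa using hh.2 (indicator_compl_singleton_mem_upperBounds_measurableIndicatorsIn hh.1 hy) y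

theorem IsLUB.measurableSet_of_measurableIndicatorsIn (hh : IsLUB (measurableIndicatorsIn V) h) :
    MeasurableSet V := by
  have hV : V = h.1 ⁻¹' Ici 1 := by
    ext x
    refine ⟨one_le_of_mem_upperBounds_measurableIndicatorsIn hh.1, fun hx => ?_⟩
    by_contra hxV
    have : (1 : ℝ) ≤ h.1 x := hx
    linarith [hh.nonpos_of_notMem_measurableIndicatorsIn hxV]
  exact hV ▸ h.2 measurableSet_Ici

end

/-- The Kleisli homset `Kl(𝒢)([0,1], 1)` of the sub-Giry monad, identified with the poset
of Borel-measurable functions `[0,1] → [0,1] ⊆ ℝ` under the pointwise order, is not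
directed-complete: for a non-Borel set `V ⊆ [0,1]`, the directed family of indicator
functions `{ χ_X | X Borel, X ⊆ V }` has no least upper bound among measurable functions. -/
theorem stmt11 (V : Set unitInterval) (hV : ¬ MeasurableSet V) :
    ¬ ∃ h : {f : unitInterval → ℝ // Measurable f},
      IsLUB {f : {f : unitInterval → ℝ // Measurable f} |
        ∃ X : Set unitInterval, MeasurableSet X ∧ X ⊆ V ∧
          f.1 = X.indicator (fun _ => (1 : ℝ))} h := by
  rintro ⟨h, hh⟩
  exact hV (hh : IsLUB (measurableIndicatorsIn V) h).measurableSet_of_measurableIndicatorsIn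
end

section
/- In a finite Markov chain, the probability (from any state y) of visiting a set F of states infinitely often equals the probability of eventually reaching the union U of all bottom strongly connected components B with B ∩ F ≠ ∅: Pr(y ⊨ GF F) = Pr(y ⊨ F U). -/
/-!
Almost every path takes only positive-probability transitions and leaves infinitely often every
set `S` of states from each of which some state outside `S` is reachable: by finiteness there are
`m` and `r < 1` such that from every state the chain stays in `S` for `m` steps with probability
at most `r`, so it stays there for `m * j` steps with probability at most `r ^ j`.

On such a path the set of states visited infinitely often is a BSCC. It is closed under
reachability, since if `u` is visited infinitely often, `u` reaches `v` and `v` is eventually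
never visited, the path eventually stays among the states other than `v` that reach `v`.
Hence `F` is visited infinitely often iff this BSCC meets `F`, iff the path enters a BSCC meeting
`F`: a path never leaves a BSCC it has entered, and every state of it is reachable from a state
visited infinitely often.
-/

open scoped ENNReal

def IsBSCC {Y : Type*} (τ : Y → Y → ℝ≥0∞) (B : Set Y) : Prop :=
  (∀ y ∈ B, ∀ y' ∈ B, Relation.ReflTransGen (fun a b => τ a b ≠ 0) y y') ∧
  (∀ y ∈ B, ∀ y', y' ∉ B → τ y y' = 0)

open MeasureTheory Finset Filter

namespace MarkovChain

variable {Y : Type*}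

def CanLeave (τ : Y → Y → ℝ≥0∞) (S : Set Y) : Prop :=
  ∀ x ∈ S, ∃ b ∉ S, Relation.ReflTransGen (fun a b => τ a b ≠ 0) x b

section StayProb

variable [Fintype Y] (τ : Y → Y → ℝ≥0∞)

noncomputable def stayProb (S : Set Y) : ℕ → Y → ℝ≥0∞
  | 0 => S.indicator 1
  | k + 1 => S.indicator fun x => ∑ y, τ x y * stayProb S k y

variable {τ} {S : Set Y}

lemma stayProb_of_notMem {x : Y} (hx : x ∉ S) (k : ℕ) : stayProb τ S k x = 0 := by
  cases k <;> simp [stayProb, hx]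

lemma stayProb_succ_of_mem {x : Y} (hx : x ∈ S) (k : ℕ) :
    stayProb τ S (k + 1) x = ∑ y, τ x y * stayProb τ S k y := by
  simp [stayProb, hx]

lemma sum_mul_le_of_le_one (hτ : ∀ x, ∑ y, τ x y ≤ 1) {f : Y → ℝ≥0∞} (hf : ∀ y, f y ≤ 1)
    (x : Y) : ∑ y, τ x y * f y ≤ 1 :=
  calc ∑ y, τ x y * f y ≤ ∑ y, τ x y := sum_le_sum fun y _ => mul_le_of_le_one_right' (hf y)
    _ ≤ 1 := hτ x

lemma stayProb_le_one (hτ : ∀ x, ∑ y, τ x y ≤ 1) (k : ℕ) (x : Y) : stayProb τ S k x ≤ 1 := by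
  by_cases hx : x ∈ S
  · cases k with
    | zero => simp [stayProb, hx]
    | succ k =>
      rw [stayProb_succ_of_mem hx]
      exact sum_mul_le_of_le_one hτ (stayProb_le_one hτ k) x
  · simp [stayProb_of_notMem hx]

lemma antitone_stayProb (hτ : ∀ x, ∑ y, τ x y ≤ 1) (x : Y) :
    Antitone fun k => stayProb τ S k x := by
  refine antitone_nat_of_succ_le fun k => ?_
  induction k generalizing x with
  | zero =>
    by_cases hx : x ∈ S
    · simpa [stayProb_succ_of_mem hx, stayProb, hx] using
        sum_mul_le_of_le_one hτ (stayProb_le_one hτ 0) x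
    · simp [stayProb_of_notMem hx]
  | succ k ih =>
    by_cases hx : x ∈ S
    · rw [stayProb_succ_of_mem hx, stayProb_succ_of_mem hx]
      gcongr with y
      exact ih y
    · simp [stayProb_of_notMem hx]

lemma stayProb_add_le {m : ℕ} {r : ℝ≥0∞} (hr : ∀ z, stayProb τ S m z ≤ r) (k : ℕ) (x : Y) :
    stayProb τ S (k + m) x ≤ stayProb τ S k x * r := by
  by_cases hx : x ∈ S
  · cases k with
    | zero => simpa [stayProb, hx] using hr x
    | succ k =>
      rw [Nat.add_right_comm, stayProb_succ_of_mem hx, stayProb_succ_of_mem hx, sum_mul]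
      refine sum_le_sum fun y _ => ?_
      rw [mul_assoc]
      gcongr
      exact stayProb_add_le hr k y
  · simp [stayProb_of_notMem hx]

lemma stayProb_mul_le (hτ : ∀ x, ∑ y, τ x y ≤ 1) {m : ℕ} {r : ℝ≥0∞}
    (hr : ∀ z, stayProb τ S m z ≤ r) (j : ℕ) (x : Y) : stayProb τ S (j * m) x ≤ r ^ j := by
  induction j generalizing x with
  | zero => simpa using stayProb_le_one hτ 0 x
  | succ j ih =>
    rw [add_mul, one_mul, pow_succ]
    exact (stayProb_add_le hr _ x).trans (by gcongr; exact ih x)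

lemma exists_stayProb_lt_one (hτ : ∀ x, ∑ y, τ x y ≤ 1) {x b : Y}
    (hxb : Relation.ReflTransGen (fun a b => τ a b ≠ 0) x b) (hb : b ∉ S) :
    ∃ k, stayProb τ S k x < 1 := by
  induction hxb using Relation.ReflTransGen.head_induction_on with
  | refl => exact ⟨0, by simp [stayProb_of_notMem hb]⟩
  | @head x x' hxx' _ ih =>
    classical
    obtain ⟨k, hk⟩ := ih
    refine ⟨k + 1, ?_⟩
    by_cases hx : x ∈ S
    · rw [stayProb_succ_of_mem hx, ← add_sum_erase _ _ (mem_univ x')]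
      calc τ x x' * stayProb τ S k x' + ∑ y ∈ univ.erase x', τ x y * stayProb τ S k y
          < τ x x' + ∑ y ∈ univ.erase x', τ x y := by
            refine ENNReal.add_lt_add_of_lt_of_le ?_ ?_ ?_
            · refine ne_top_of_le_ne_top ENNReal.one_ne_top ?_
              exact (sum_le_sum_of_subset (erase_subset _ _)).trans
                (sum_mul_le_of_le_one hτ (stayProb_le_one hτ k) x)
            · have hτ_ne_top : τ x x' ≠ ⊤ := ne_top_of_le_ne_top ENNReal.one_ne_top
                ((single_le_sum (fun _ _ => zero_le) (mem_univ x')).trans (hτ x))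
              exact (ENNReal.mul_lt_mul_right hxx' hτ_ne_top hk).trans_eq (mul_one _)
            · exact sum_le_sum fun y _ => mul_le_of_le_one_right' (stayProb_le_one hτ k y)
        _ = ∑ y, τ x y := add_sum_erase _ _ (mem_univ x')
        _ ≤ 1 := hτ x
    · simp [stayProb_of_notMem hx]

lemma CanLeave.exists_stayProb_le (hS : CanLeave τ S) (hτ : ∀ x, ∑ y, τ x y ≤ 1) :
    ∃ m, ∃ r < 1, ∀ x, stayProb τ S m x ≤ r := by
  have hexists : ∀ x, ∃ k, stayProb τ S k x < 1 := fun x => by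
    by_cases hx : x ∈ S
    · obtain ⟨b, hb, hxb⟩ := hS x hx
      exact exists_stayProb_lt_one hτ hxb hb
    · exact ⟨0, by simp [stayProb_of_notMem hx]⟩
  choose k hk using hexists
  refine ⟨univ.sup k, univ.sup fun x => stayProb τ S (univ.sup k) x, ?_,
    fun x => le_sup (mem_univ x)⟩
  refine (Finset.sup_lt_iff zero_lt_one).2 fun x _ => ?_
  exact (antitone_stayProb hτ x (le_sup (mem_univ x))).trans_lt (hk x)

end StayProb

structure IsTypicalPath (τ : Y → Y → ℝ≥0∞) (ω : ℕ → Y) : Prop where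
  transition_ne_zero : ∀ i, τ (ω i) (ω (i + 1)) ≠ 0
  frequently_notMem : ∀ S, CanLeave τ S → ∃ᶠ t in atTop, ω t ∉ S

namespace IsTypicalPath

variable {τ : Y → Y → ℝ≥0∞} {ω : ℕ → Y}

lemma reflTransGen (hω : IsTypicalPath τ ω) {i j : ℕ} (hij : i ≤ j) :
    Relation.ReflTransGen (fun a b => τ a b ≠ 0) (ω i) (ω j) := by
  induction j, hij using Nat.le_induction with
  | base => exact .refl
  | succ j _ ih => exact ih.tail (hω.transition_ne_zero j)

lemma frequently_eq_of_reflTransGen (hω : IsTypicalPath τ ω) {u v : Y}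
    (hu : ∃ᶠ i in atTop, ω i = u) (huv : Relation.ReflTransGen (fun a b => τ a b ≠ 0) u v) :
    ∃ᶠ i in atTop, ω i = v := by
  by_contra hv
  rw [not_frequently] at hv
  set S := {x | Relation.ReflTransGen (fun a b => τ a b ≠ 0) x v ∧ x ≠ v}
  have hS : CanLeave τ S := fun x hx => ⟨v, fun h => h.2 rfl, hx.1⟩
  have hstay : ∀ᶠ t in atTop, ω t ∈ S := hv.mono fun t ht => by
    obtain ⟨i, hti, hi⟩ := hu.forall_exists_of_atTop t
    exact ⟨(hω.reflTransGen hti).trans (hi ▸ huv), ht⟩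
  obtain ⟨t, hout, hin⟩ := ((hω.frequently_notMem S hS).and_eventually hstay).exists
  exact hout hin

lemma isBSCC_setOf_frequently_eq (hω : IsTypicalPath τ ω) :
    IsBSCC τ {s | ∃ᶠ i in atTop, ω i = s} := by
  refine ⟨fun u hu v hv => ?_, fun u hu v hv => ?_⟩
  · obtain ⟨i, rfl⟩ := hu.exists
    obtain ⟨j, hij, rfl⟩ := hv.forall_exists_of_atTop i
    exact hω.reflTransGen hij
  · by_contra huv
    exact hv (hω.frequently_eq_of_reflTransGen hu (.single huv))

lemma mem_of_isBSCC (hω : IsTypicalPath τ ω) {B : Set Y} (hB : IsBSCC τ B) {i j : ℕ}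
    (hi : ω i ∈ B) (hij : i ≤ j) : ω j ∈ B := by
  induction j, hij using Nat.le_induction with
  | base => exact hi
  | succ j _ ih =>
    by_contra h
    exact hω.transition_ne_zero j (hB.2 _ ih _ h)

lemma frequently_mem_iff [Finite Y] (hω : IsTypicalPath τ ω) (F : Set Y) :
    (∃ᶠ i in atTop, ω i ∈ F) ↔ ∃ i, ω i ∈ ⋃ B ∈ {B | IsBSCC τ B ∧ (B ∩ F).Nonempty}, B := by
  have hfiber : ∀ F : Set Y, (∃ᶠ i in atTop, ω i ∈ F) ↔ ∃ s ∈ F, ∃ᶠ i in atTop, ω i = s :=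
    fun F => by simpa using (Set.toFinite F).frequently_exists (l := atTop) (p := fun s i => ω i = s)
  simp only [Set.mem_iUnion, Set.mem_ofPred_eq, exists_prop]
  constructor
  · intro h
    obtain ⟨s, hsF, hs⟩ := (hfiber F).1 h
    obtain ⟨i, hi⟩ := hs.exists
    exact ⟨i, _, ⟨hω.isBSCC_setOf_frequently_eq, s, hs, hsF⟩,
      show ∃ᶠ j in atTop, ω j = ω i from hi ▸ hs⟩
  · rintro ⟨i, B, ⟨hB, f, hfB, hfF⟩, hiB⟩
    obtain ⟨s, -, hs⟩ := (hfiber Set.univ).1 (.of_forall fun _ => Set.mem_univ _)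
    obtain ⟨j, hij, rfl⟩ := hs.forall_exists_of_atTop i
    have hfreq := hω.frequently_eq_of_reflTransGen hs (hB.1 _ (hω.mem_of_isBSCC hB hiB hij) f hfB)
    exact hfreq.mono fun t ht => ht ▸ hfF

end IsTypicalPath

/-- With `i < n` rather than `i ≤ n`, `prefixSet 0 c = univ`, so that the refinement
`prefixSet_eq_iUnion` also covers the passage from the whole space to the initial state. -/
def prefixSet (n : ℕ) (c : ℕ → Y) : Set (ℕ → Y) := {ω | ∀ i < n, ω i = c i}

def stayEvent (S : Set Y) (n k : ℕ) : Set (ℕ → Y) := {ω | ∀ j ≤ k, ω (n + j) ∈ S}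

def IsMarkovLaw [MeasurableSpace Y] (τ : Y → Y → ℝ≥0∞) (ν : Measure (ℕ → Y)) : Prop :=
  ∀ n c, ν (prefixSet (n + 2) c) = ν (prefixSet (n + 1) c) * τ (c n) (c (n + 1))

lemma prefixSet_zero (c : ℕ → Y) : prefixSet 0 c = Set.univ := by
  simp [prefixSet]

lemma prefixSet_update_of_le {n m : ℕ} (h : n ≤ m) (c : ℕ → Y) (y : Y) :
    prefixSet n (Function.update c m y) = prefixSet n c := by
  ext ω
  simp only [prefixSet, Set.mem_ofPred_eq]
  exact forall₂_congr fun i hi => by rw [Function.update_of_ne (by omega)]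

lemma prefixSet_eq_iUnion (n : ℕ) (c : ℕ → Y) :
    prefixSet n c = ⋃ y, prefixSet (n + 1) (Function.update c n y) := by
  ext ω
  simp only [prefixSet, Set.mem_ofPred_eq, Set.mem_iUnion]
  constructor
  · intro h
    refine ⟨ω n, fun i hi => ?_⟩
    rcases Nat.lt_succ_iff_lt_or_eq.1 hi with hi | rfl
    · rw [Function.update_of_ne hi.ne, h i hi]
    · rw [Function.update_self]
  · rintro ⟨y, h⟩ i hi
    rw [h i (by omega), Function.update_of_ne hi.ne]

lemma pairwise_disjoint_prefixSet_update (n : ℕ) (c : ℕ → Y) :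
    Pairwise (Function.onFun Disjoint fun y => prefixSet (n + 1) (Function.update c n y)) := by
  intro y y' hne
  refine Set.disjoint_left.2 fun ω h h' => hne ?_
  simpa using (h n n.lt_succ_self).symm.trans (h' n n.lt_succ_self)

lemma prefixSet_inter_stayEvent_of_notMem {S : Set Y} {n : ℕ} {c : ℕ → Y} (hc : c n ∉ S)
    (k : ℕ) : prefixSet (n + 1) c ∩ stayEvent S n k = ∅ :=
  Set.eq_empty_of_forall_notMem fun _ ⟨hω, hS⟩ =>
    hc (hω n n.lt_succ_self ▸ hS 0 k.zero_le)

lemma prefixSet_inter_stayEvent_succ {S : Set Y} {n : ℕ} {c : ℕ → Y} (hc : c n ∈ S) (k : ℕ) :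
    prefixSet (n + 1) c ∩ stayEvent S n (k + 1) = prefixSet (n + 1) c ∩ stayEvent S (n + 1) k := by
  ext ω
  simp only [Set.mem_inter_iff, stayEvent, Set.mem_ofPred_eq, and_congr_right_iff]
  intro hω
  constructor
  · intro h j hj
    rw [Nat.add_right_comm]
    exact h (j + 1) (by omega)
  · intro h j hj
    rcases j with _ | j
    · simpa [hω n n.lt_succ_self] using hc
    · rw [show n + (j + 1) = n + 1 + j by omega]
      exact h j (by omega)

section Measure

variable [MeasurableSpace Y] {τ : Y → Y → ℝ≥0∞} {ν : Measure (ℕ → Y)}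

lemma IsMarkovLaw.measure_prefixSet_update (hν : IsMarkovLaw τ ν) (n : ℕ) (c : ℕ → Y)
    (y : Y) :
    ν (prefixSet (n + 2) (Function.update c (n + 1) y)) = ν (prefixSet (n + 1) c) * τ (c n) y := by
  rw [hν, prefixSet_update_of_le le_rfl, Function.update_self,
    Function.update_of_ne (Nat.succ_ne_self n).symm]

lemma isMarkovLaw_of_measure_eq [DecidableEq Y] {y : Y}
    (h : ∀ (n : ℕ) (c : ℕ → Y), ν {ω | ∀ i ≤ n, ω i = c i} =
      if c 0 = y then ∏ i ∈ range n, τ (c i) (c (i + 1)) else 0) :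
    IsMarkovLaw τ ν := by
  intro n c
  have hprefix : ∀ m, prefixSet (m + 1) c = {ω | ∀ i ≤ m, ω i = c i} := fun m => by
    simp [prefixSet]
  rw [hprefix, hprefix, h, h, prod_range_succ]
  split_ifs <;> simp

variable [DiscreteMeasurableSpace Y]

lemma measurableSet_prefixSet (n : ℕ) (c : ℕ → Y) : MeasurableSet (prefixSet n c) := by
  simp only [prefixSet, Set.ofPred_forall]
  exact .iInter fun i => .iInter fun _ =>
    show MeasurableSet ((fun ω : ℕ → Y => ω i) ⁻¹' {c i}) from measurable_pi_apply i .of_discrete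

lemma measurableSet_stayEvent (S : Set Y) (n k : ℕ) : MeasurableSet (stayEvent S n k) := by
  simp only [stayEvent, Set.ofPred_forall]
  exact .iInter fun j => .iInter fun _ => measurable_pi_apply (n + j) .of_discrete

variable [Fintype Y]

lemma measure_prefixSet_inter {A : Set (ℕ → Y)} (hA : MeasurableSet A) (n : ℕ) (c : ℕ → Y) :
    ν (prefixSet n c ∩ A) = ∑ y, ν (prefixSet (n + 1) (Function.update c n y) ∩ A) := by
  rw [prefixSet_eq_iUnion, Set.iUnion_inter,
    measure_iUnion ?_ fun y => (measurableSet_prefixSet _ _).inter hA, tsum_fintype]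
  exact (pairwise_disjoint_prefixSet_update n c).mono fun _ _ h =>
    h.mono Set.inter_subset_left Set.inter_subset_left

lemma measure_le_of_forall_prefixSet {A : Set (ℕ → Y)} (hA : MeasurableSet A) {T : ℕ}
    {r : ℝ≥0∞} (h : ∀ c, ν (prefixSet T c ∩ A) ≤ r * ν (prefixSet T c)) :
    ν A ≤ r * ν Set.univ := by
  have key : ∀ n ≤ T, ∀ c, ν (prefixSet n c ∩ A) ≤ r * ν (prefixSet n c) := by
    refine fun n hn => Nat.decreasingInduction (motive := fun n _ => ∀ c,
      ν (prefixSet n c ∩ A) ≤ r * ν (prefixSet n c)) (fun n _ ih c => ?_) h hn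
    calc ν (prefixSet n c ∩ A)
        = ∑ y, ν (prefixSet (n + 1) (Function.update c n y) ∩ A) :=
          measure_prefixSet_inter hA n c
      _ ≤ ∑ y, r * ν (prefixSet (n + 1) (Function.update c n y)) := sum_le_sum fun y _ => ih _
      _ = r * ν (prefixSet n c) := by
          rw [← mul_sum]
          simpa using congrArg (r * ·) (measure_prefixSet_inter (ν := ν) .univ n c).symm
  rcases A.eq_empty_or_nonempty with rfl | ⟨ω, -⟩
  · simp
  · simpa [prefixSet_zero] using key 0 T.zero_le ω

lemma IsMarkovLaw.measure_prefixSet_inter_stayEvent (hν : IsMarkovLaw τ ν) (S : Set Y)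
    (k n : ℕ) (c : ℕ → Y) :
    ν (prefixSet (n + 1) c ∩ stayEvent S n k) = ν (prefixSet (n + 1) c) * stayProb τ S k (c n) := by
  by_cases hc : c n ∈ S
  · induction k generalizing n c with
    | zero =>
      have : prefixSet (n + 1) c ⊆ stayEvent S n 0 := fun ω hω j hj => by
        simpa [Nat.le_zero.1 hj, hω n n.lt_succ_self] using hc
      simp [Set.inter_eq_left.2 this, stayProb, hc]
    | succ k ih =>
      rw [prefixSet_inter_stayEvent_succ hc, measure_prefixSet_inter (measurableSet_stayEvent ..),
        stayProb_succ_of_mem hc, mul_sum]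
      refine sum_congr rfl fun y _ => ?_
      by_cases hy : y ∈ S
      · rw [ih, Function.update_self, hν.measure_prefixSet_update, mul_assoc]
        simpa using hy
      · rw [prefixSet_inter_stayEvent_of_notMem (by simpa using hy), stayProb_of_notMem hy]
        simp
  · simp [prefixSet_inter_stayEvent_of_notMem hc, stayProb_of_notMem hc]

lemma IsMarkovLaw.measure_stayEvent_le (hν : IsMarkovLaw τ ν) {S : Set Y} {k : ℕ}
    {r : ℝ≥0∞} (hr : ∀ x, stayProb τ S k x ≤ r) (T : ℕ) : ν (stayEvent S T k) ≤ r * ν Set.univ :=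
  measure_le_of_forall_prefixSet (T := T + 1) (measurableSet_stayEvent ..) fun c => by
    rw [hν.measure_prefixSet_inter_stayEvent, mul_comm]
    gcongr
    exact hr _

lemma IsMarkovLaw.ae_frequently_notMem [IsFiniteMeasure ν] (hν : IsMarkovLaw τ ν)
    (hτ : ∀ x, ∑ y, τ x y ≤ 1) {S : Set Y} (hS : CanLeave τ S) :
    ∀ᵐ ω ∂ν, ∃ᶠ t in atTop, ω t ∉ S := by
  simp only [ae_iff, not_frequently, not_not, eventually_atTop, Set.ofPred_exists]
  refine measure_iUnion_null fun T => ?_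
  obtain ⟨m, r, hr, hm⟩ := hS.exists_stayProb_le hτ
  have hsub : ∀ j, {ω : ℕ → Y | ∀ t, T ≤ t → ω t ∈ S} ⊆ stayEvent S T (j * m) :=
    fun _ _ hω _ _ => hω _ (Nat.le_add_right _ _)
  have hle : ∀ j, ν {ω | ∀ t, T ≤ t → ω t ∈ S} ≤ r ^ j * ν Set.univ := fun j =>
    (measure_mono (hsub j)).trans (hν.measure_stayEvent_le (stayProb_mul_le hτ hm j) T)
  have hlim : Tendsto (fun j : ℕ => r ^ j * ν Set.univ) atTop (nhds 0) := by
    simpa using ENNReal.Tendsto.mul_const (ENNReal.tendsto_pow_atTop_nhds_zero_of_lt_one hr)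
      (Or.inr (measure_ne_top ν _))
  exact le_antisymm (ge_of_tendsto' hlim hle) zero_le

lemma IsMarkovLaw.ae_transition_ne_zero (hν : IsMarkovLaw τ ν) :
    ∀ᵐ ω ∂ν, ∀ i, τ (ω i) (ω (i + 1)) ≠ 0 := by
  refine ae_all_iff.2 fun i => ?_
  simp only [ae_iff, not_not]
  have hA : MeasurableSet {ω : ℕ → Y | τ (ω i) (ω (i + 1)) = 0} := by measurability
  refine le_antisymm ((measure_le_of_forall_prefixSet (T := i + 2) (r := 0) hA fun c => ?_).trans_eq
    (zero_mul _)) zero_le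
  by_cases hc : τ (c i) (c (i + 1)) = 0
  · calc _ ≤ ν (prefixSet (i + 2) c) := measure_mono Set.inter_subset_left
      _ = 0 * _ := by rw [hν, hc, mul_zero, zero_mul]
  · have : prefixSet (i + 2) c ∩ {ω | τ (ω i) (ω (i + 1)) = 0} = ∅ :=
      Set.eq_empty_of_forall_notMem fun ω ⟨hω, (h0 : τ (ω i) (ω (i + 1)) = 0)⟩ =>
        hc (by rwa [hω i (by omega), hω (i + 1) (by omega)] at h0)
    simp [this]

lemma IsMarkovLaw.ae_isTypicalPath [IsFiniteMeasure ν] (hν : IsMarkovLaw τ ν)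
    (hτ : ∀ x, ∑ y, τ x y ≤ 1) : ∀ᵐ ω ∂ν, IsTypicalPath τ ω := by
  have hleave : ∀ᵐ ω ∂ν, ∀ S, CanLeave τ S → ∃ᶠ t in atTop, ω t ∉ S :=
    ae_all_iff.2 fun S => eventually_imp_distrib_left.2 (hν.ae_frequently_notMem hτ)
  filter_upwards [hν.ae_transition_ne_zero, hleave] with ω h₁ h₂ using ⟨h₁, h₂⟩

end Measure

end MarkovChain

open MarkovChain

/-- In a finite Markov chain (with path measures `μ y` determined on cylinders by the
transition probabilities `τ`), the probability from any state `y` of visiting a set `F`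
infinitely often (`GF F`) equals the probability of eventually reaching (`F U`) the union
`U` of all bottom strongly connected components meeting `F`. -/
theorem stmt14 {Y : Type*} [Fintype Y] [DecidableEq Y]
    (τ : Y → Y → ℝ≥0∞) (hτ : ∀ y, ∑ y' : Y, τ y y' = 1)
    (μ : Y → @MeasureTheory.Measure (ℕ → Y)
      (@MeasurableSpace.pi ℕ (fun _ => Y) (fun _ => ⊤)))
    (hprob : ∀ y, MeasureTheory.IsProbabilityMeasure (μ y))
    (hcyl : ∀ (y : Y) (n : ℕ) (c : ℕ → Y),
      μ y {ω | ∀ i ≤ n, ω i = c i} =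
        if c 0 = y then ∏ i ∈ Finset.range n, τ (c i) (c (i + 1)) else 0)
    (F : Set Y) (y : Y) :
    μ y {ω | {i : ℕ | ω i ∈ F}.Infinite} =
      μ y {ω | ∃ i : ℕ, ω i ∈ ⋃ B ∈ {B : Set Y | IsBSCC τ B ∧ (B ∩ F).Nonempty}, B} := by
  let _ : MeasurableSpace Y := ⊤
  have := hprob y
  have hν : IsMarkovLaw τ (μ y) := isMarkovLaw_of_measure_eq (hcyl y)
  refine measure_congr (eventuallyEq_set.2 ?_)
  filter_upwards [hν.ae_isTypicalPath fun x => (hτ x).le] with ω hω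
  rw [← Nat.frequently_atTop_iff_infinite]
  exact hω.frequently_mem_iff F
end
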